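/- arXiv:1511.03730 — 2 statements merged into one kernel-verified Lean document; each statement's English description precedes it below -/
import Mathlib

section
/- Let x_1, ..., x_n be positive real numbers such that their sum equals n and the sum of (x_i - 1)^2 is strictly greater than 1. Then the product of the x_i is at most exp(-1/6). -/
/-!
Pointwise, `log x ≤ (x - 1) - min ((x - 1)²) 1 / 6` for every `x > 0`. Summing over `i`, the linear
terms cancel because `∑ xᵢ = n`, while `∑ min ((xᵢ - 1)²) 1 ≥ min (∑ (xᵢ - 1)²) 1 = 1`, so
`log ∏ xᵢ ≤ -1/6`. The pointwise bound reduces to polynomial inequalities through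
`log (u³) = 3 log u ≤ 3 (u - 1)`.
-/

open Real Finset

theorem Finset.min_sum_le_sum_min {ι α : Type*} [AddCommMonoid α] [LinearOrder α]
    [IsOrderedAddMonoid α] (s : Finset ι) {f : ι → α} (hf : ∀ i ∈ s, 0 ≤ f i) {c : α}
    (hc : 0 ≤ c) : min (∑ i ∈ s, f i) c ≤ ∑ i ∈ s, min (f i) c := by
  classical
  induction s using Finset.induction_on with
  | empty => simp
  | insert a s ha ih =>
    rw [sum_insert ha, sum_insert ha]
    have hfa : 0 ≤ f a := hf a (mem_insert_self a s)
    have hs : 0 ≤ ∑ i ∈ s, f i := sum_nonneg fun i hi => hf i (mem_insert_of_mem hi)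
    have ih := ih fun i hi => hf i (mem_insert_of_mem hi)
    have hsplit : min (f a + ∑ i ∈ s, f i) c ≤ min (f a) c + min (∑ i ∈ s, f i) c := by
      rcases le_total (f a) c with hac | hca <;> rcases le_total (∑ i ∈ s, f i) c with hsc | hcs
      · simp [hac, hsc]
      · simpa [hac, hcs] using (min_le_right _ _).trans (le_add_of_nonneg_left hfa)
      · simpa [hca, hsc] using (min_le_right _ _).trans (le_add_of_nonneg_right hs)
      · simpa [hca, hcs] using (min_le_right _ _).trans (le_add_of_nonneg_right hc)
    exact hsplit.trans (by gcongr)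

lemma Real.log_pow_three_le {u : ℝ} (hu : 0 < u) : log (u ^ 3) ≤ 3 * (u - 1) := by
  rw [log_pow]
  push_cast
  linarith [log_le_sub_one_of_pos hu]

lemma Real.exists_pos_pow_three_eq {x : ℝ} (hx : 0 < x) : ∃ u, 0 < u ∧ u ^ 3 = x :=
  ⟨x ^ ((3 : ℕ)⁻¹ : ℝ), by positivity, rpow_inv_natCast_pow hx.le (by norm_num)⟩

lemma Real.log_le_sub_one_sub_sq_div_six {x : ℝ} (hx : 0 < x) (hx3 : x ≤ 3) :
    log x ≤ (x - 1) - (x - 1) ^ 2 / 6 := by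
  obtain ⟨u, hu, rfl⟩ := exists_pos_pow_three_eq hx
  have hu_le : u ≤ 29 / 20 := by nlinarith [sq_nonneg (u - 29 / 20), sq_nonneg (u + 29 / 20)]
  -- `(u³ - 1) - (u³ - 1)² / 6 - 3 (u - 1) = (u - 1)² (6 (u + 2) - (u² + u + 1)²) / 6`
  have hfactor : 0 ≤ 6 * (u + 2) - (u ^ 2 + u + 1) ^ 2 := by nlinarith [sq_nonneg u]
  have hpoly : 3 * (u - 1) ≤ (u ^ 3 - 1) - (u ^ 3 - 1) ^ 2 / 6 := by
    nlinarith [mul_nonneg (sq_nonneg (u - 1)) hfactor]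
  exact (log_pow_three_le hu).trans hpoly

lemma Real.log_le_sub_four_thirds {x : ℝ} (hx3 : 3 ≤ x) : log x ≤ x - 4 / 3 := by
  obtain ⟨u, hu, rfl⟩ := exists_pos_pow_three_eq (by linarith : (0 : ℝ) < x)
  have hu_ge : 7 / 5 ≤ u := by nlinarith [sq_nonneg (u - 7 / 5), sq_nonneg (u + 7 / 5)]
  have hpoly : 3 * (u - 1) ≤ u ^ 3 - 4 / 3 := by
    nlinarith [mul_nonneg (sub_nonneg.mpr hu_ge) (sq_nonneg (u - 7 / 5))]
  exact (log_pow_three_le hu).trans hpoly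

lemma Real.log_le_sub_one_sub_min_sq_one_div_six {x : ℝ} (hx : 0 < x) :
    log x ≤ (x - 1) - min ((x - 1) ^ 2) 1 / 6 := by
  rcases le_total x 3 with hx3 | hx3
  · linarith [log_le_sub_one_sub_sq_div_six hx hx3, min_le_left ((x - 1) ^ 2) 1]
  · linarith [log_le_sub_four_thirds hx3, min_le_right ((x - 1) ^ 2) 1]

theorem product_upper_bound_large_alpha (n : ℕ) (x : Fin n → ℝ)
    (hx : ∀ i, 0 < x i) (hsum : ∑ i, x i = n)
    (h : 1 < ∑ i, (x i - 1) ^ 2) :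
    ∏ i, x i ≤ Real.exp (-1 / 6) := by
  have hdev : ∑ i, (x i - 1) = 0 := by simp [sum_sub_distrib, hsum]
  have hmin : 1 ≤ ∑ i, min ((x i - 1) ^ 2) 1 := by
    simpa [h.le] using min_sum_le_sum_min univ (fun i _ => sq_nonneg (x i - 1)) zero_le_one
  rw [← log_le_iff_le_exp (prod_pos fun i _ => hx i), log_prod fun i _ => (hx i).ne']
  calc ∑ i, log (x i) ≤ ∑ i, ((x i - 1) - min ((x i - 1) ^ 2) 1 / 6) :=
        sum_le_sum fun i _ => log_le_sub_one_sub_min_sq_one_div_six (hx i)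
    _ = ∑ i, (x i - 1) - (∑ i, min ((x i - 1) ^ 2) 1) / 6 := by rw [sum_sub_distrib, sum_div]
    _ ≤ -1 / 6 := by linarith
end

section
/- Let T be a completely positive operator on M_n(ℂ) and suppose C is a Hermitian positive definite matrix such that trace[(C · T*(T(C)^{-1}) − I)²] ≤ ε with ε ≤ 1/(n+1). Then cap(T) ≥ (1 − √(nε))^n · Det(T(C))/Det(C) and cap(T) ≤ Det(T(C))/Det(C). -/
open Matrix
open scoped ComplexOrder

/-- The capacity of the completely positive operator `T(X) = ∑ i, A i * X * (A i)ᴴ`. -/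
noncomputable def cap {ι N : Type*} [Fintype ι] [Fintype N] [DecidableEq N]
    (A : ι → Matrix N N ℂ) : ℝ :=
  sInf { r : ℝ | ∃ X : Matrix N N ℂ,
    X.PosDef ∧ X.det = 1 ∧ ((∑ i, A i * X * (A i)ᴴ).det).re = r }

/-!
Write `C = R Rᴴ` and `T(C) = S Sᴴ`. The scaled operator with Kraus operators `B l = S⁻¹ (A l) R`
satisfies `∑ B l (B l)ᴴ = 1`, and `∑ (B l)ᴴ B l` has the same trace of `(· - 1)²` as
`C · T*(T(C)⁻¹)`, hence at most `ε`. Determinants transform multiplicatively, so the lower bound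
reduces to `det (∑ B l Z (B l)ᴴ) ≥ (1 - β)ⁿ det Z` for `Z ⪰ 0`, where `β = √(nε) < 1`.

In eigenbases of `Z` (eigenvalues `λ`) and of its image (eigenvalues `μ`) one gets
`μ i = ∑ j, a i j * λ j`, where `a i j = ∑ l |(Wᴴ (B l) V) i j|²` is row stochastic and its column
sums `c` satisfy `∑ (c j - 1)² ≤ ε`; by Cauchy–Schwarz every set `S` of columns carries mass at
least `|S| - β`. List the columns by decreasing `λ`. A greedy transport then yields a doubly
stochastic `g` whose row prefix sums are dominated by those of `a / (1 - β)`, so Abel summation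
gives `(1 - β) ∑ j, g i j * λ j ≤ μ i`, and weighted AM–GM together with the unit column sums of
`g` gives `∏ i, ∑ j, g i j * λ j ≥ ∏ j, λ j`.

The upper bound comes from evaluating at `C`, rescaled to determinant one.
-/

open Finset

theorem sum_range_mul_le_of_forall_sum_range_le {p q lam : ℕ → ℝ} {N : ℕ}
    (hpq : ∀ k ≤ N, ∑ j ∈ range k, q j ≤ ∑ j ∈ range k, p j)
    (hlam : Antitone lam) (hlam0 : ∀ j, 0 ≤ lam j) :
    ∑ j ∈ range N, q j * lam j ≤ ∑ j ∈ range N, p j * lam j := by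
  have hH : ∀ k ≤ N, 0 ≤ ∑ j ∈ range k, (p j - q j) := fun k hk => by
    rw [sum_sub_distrib]; linarith [hpq k hk]
  have hterm : ∀ i ∈ range (N - 1),
      (lam (i + 1) - lam i) * ∑ j ∈ range (i + 1), (p j - q j) ≤ 0 := fun i hi =>
    mul_nonpos_of_nonpos_of_nonneg (sub_nonpos.2 (hlam i.le_succ))
      (hH _ (by have := mem_range.1 hi; omega))
  have key : 0 ≤ ∑ j ∈ range N, lam j • (p j - q j) := by
    rw [sum_range_by_parts]
    exact sub_nonneg.2 ((sum_nonpos hterm).trans (mul_nonneg (hlam0 (N - 1)) (hH N le_rfl)))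
  simpa only [smul_eq_mul, mul_comm (lam _), sub_mul, sum_sub_distrib, sub_nonneg] using key

section Transport

variable {ι : Type*} [Fintype ι]

theorem natCast_le_sum_min_one_div {β : ℝ} (hβ0 : 0 ≤ β) (hβ1 : β < 1) {x : ι → ℝ}
    (hx0 : ∀ i, 0 ≤ x i) (hx1 : ∀ i, x i ≤ 1) {k : ℕ} (hk : (k : ℝ) - β ≤ ∑ i, x i) :
    (k : ℝ) ≤ ∑ i, min 1 (x i / (1 - β)) := by
  classical
  have h1β : 0 < 1 - β := by linarith
  set T := univ.filter fun i => 1 - β < x i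
  set T' := univ.filter fun i => ¬ 1 - β < x i
  have hT : ∑ i ∈ T, min 1 (x i / (1 - β)) = #T := by
    rw [sum_congr rfl fun i hi => min_eq_left ?_]
    · simp
    · rw [le_div_iff₀ h1β]; linarith [(mem_filter.1 hi).2]
  have hT' : ∑ i ∈ T', min 1 (x i / (1 - β)) = (∑ i ∈ T', x i) / (1 - β) := by
    rw [sum_div]
    refine sum_congr rfl fun i hi => min_eq_right ?_
    rw [div_le_one h1β]; exact not_lt.1 (mem_filter.1 hi).2
  rw [← sum_filter_add_sum_filter_not univ (fun i => 1 - β < x i), hT, hT']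
  rcases le_or_gt k #T with hkT | hTk
  · have : (k : ℝ) ≤ #T := by exact_mod_cast hkT
    linarith [div_nonneg (sum_nonneg fun i (_ : i ∈ T') => hx0 i) h1β.le]
  · -- as `k - #T ≥ 1`, dividing by `1 - β` makes up for the deficit `β`
    have hTk' : (#T : ℝ) + 1 ≤ k := by exact_mod_cast hTk
    have hxT : ∑ i ∈ T, x i ≤ #T := by simpa using sum_le_sum fun i (_ : i ∈ T) => hx1 i
    have hsplit := sum_filter_add_sum_filter_not univ (fun i => 1 - β < x i) x
    have : (k - #T : ℝ) ≤ (∑ i ∈ T', x i) / (1 - β) := by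
      rw [le_div_iff₀ h1β]; nlinarith
    linarith

noncomputable def fillStep (u f : ι → ℝ) : ι → ℝ :=
  fun i => u i + (f i - u i) / ∑ j, (f j - u j)

theorem fillStep_spec {u f : ι → ℝ} (hu : u ≤ f) (hsum : ∑ i, u i + 1 ≤ ∑ i, f i) :
    u ≤ fillStep u f ∧ fillStep u f ≤ f ∧ ∑ i, fillStep u f i = ∑ i, u i + 1 := by
  have hS : 1 ≤ ∑ j, (f j - u j) := by rw [sum_sub_distrib]; linarith
  have hd : ∀ i, 0 ≤ f i - u i := fun i => sub_nonneg.2 (hu i)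
  refine ⟨fun i => ?_, fun i => ?_, ?_⟩
  · exact le_add_of_nonneg_right (div_nonneg (hd i) (by linarith))
  · have := div_le_self (hd i) hS
    simp only [fillStep]; linarith
  · simp only [fillStep]
    rw [sum_add_distrib, ← sum_div, div_self (by linarith)]

noncomputable def greedyFill (F : ι → ℕ → ℝ) : ℕ → ι → ℝ
  | 0 => 0
  | k + 1 => fillStep (greedyFill F k) (F · (k + 1))

theorem greedyFill_spec {F : ι → ℕ → ℝ} {N : ℕ} (hF : ∀ i, Monotone (F i))
    (hF0 : ∀ i, F i 0 = 0) (hFsum : ∀ k ≤ N, (k : ℝ) ≤ ∑ i, F i k) {k : ℕ} (hk : k ≤ N) :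
    ∑ i, greedyFill F k i = k ∧ greedyFill F k ≤ (F · k) := by
  induction k with
  | zero => exact ⟨by simp [greedyFill], fun i => by simp [greedyFill, hF0]⟩
  | succ k ih =>
    obtain ⟨hsum, hle⟩ := ih (by omega)
    obtain ⟨-, hle', hsum'⟩ := fillStep_spec (fun i => (hle i).trans (hF i k.le_succ))
      (by rw [hsum]; exact_mod_cast hFsum (k + 1) hk)
    exact ⟨by rw [greedyFill, hsum', hsum]; push_cast; ring, hle'⟩

theorem greedyFill_le_succ {F : ι → ℕ → ℝ} {N : ℕ} (hF : ∀ i, Monotone (F i))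
    (hF0 : ∀ i, F i 0 = 0) (hFsum : ∀ k ≤ N, (k : ℝ) ≤ ∑ i, F i k) {k : ℕ} (hk : k < N) :
    greedyFill F k ≤ greedyFill F (k + 1) := by
  obtain ⟨hsum, hle⟩ := greedyFill_spec hF hF0 hFsum hk.le
  exact (fillStep_spec (fun i => (hle i).trans (hF i k.le_succ))
    (by rw [hsum]; exact_mod_cast hFsum (k + 1) hk)).1

theorem exists_doublyStochastic_forall_sum_range_le {F : ι → ℕ → ℝ} (hF : ∀ i, Monotone (F i))
    (hF0 : ∀ i, F i 0 = 0) (hF1 : ∀ i k, F i k ≤ 1)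
    (hFsum : ∀ k ≤ Fintype.card ι, (k : ℝ) ≤ ∑ i, F i k) :
    ∃ g : ι → ℕ → ℝ, (∀ i, ∀ j < Fintype.card ι, 0 ≤ g i j) ∧
      (∀ i, ∑ j ∈ range (Fintype.card ι), g i j = 1) ∧
      (∀ j < Fintype.card ι, ∑ i, g i j = 1) ∧
      ∀ i, ∀ k ≤ Fintype.card ι, ∑ j ∈ range k, g i j ≤ F i k := by
  set N := Fintype.card ι
  set U := greedyFill F
  have hspec : ∀ k ≤ N, ∑ i, U k i = k ∧ U k ≤ (F · k) := fun k hk =>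
    greedyFill_spec hF hF0 hFsum hk
  have hprefix : ∀ i k, ∑ j ∈ range k, (U (j + 1) i - U j i) = U k i := fun i k => by
    rw [sum_range_sub (U · i)]; simp [U, greedyFill]
  have hUN : ∀ i, U N i = 1 := by
    have hle : ∀ i, U N i ≤ 1 := fun i => ((hspec N le_rfl).2 i).trans (hF1 i N)
    have hzero : ∑ i, (1 - U N i) = 0 := by
      rw [sum_sub_distrib, (hspec N le_rfl).1]; simp [N]
    intro i
    linarith [(sum_eq_zero_iff_of_nonneg fun i _ => sub_nonneg.2 (hle i)).1 hzero i (mem_univ i)]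
  refine ⟨fun i j => U (j + 1) i - U j i, fun i j hj => ?_, fun i => ?_, fun j hj => ?_,
    fun i k hk => ?_⟩
  · exact sub_nonneg.2 (greedyFill_le_succ hF hF0 hFsum hj i)
  · rw [hprefix, hUN]
  · rw [sum_sub_distrib, (hspec (j + 1) hj).1, (hspec j hj.le).1]; push_cast; ring
  · rw [hprefix]; exact (hspec k hk).2 i

theorem prod_le_prod_sum_mul_of_doublyStochastic {κ : Type*} {s : Finset κ} {g : ι → κ → ℝ}
    {lam : κ → ℝ} (hg0 : ∀ i, ∀ j ∈ s, 0 ≤ g i j) (hrow : ∀ i, ∑ j ∈ s, g i j = 1)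
    (hcol : ∀ j ∈ s, ∑ i, g i j = 1) (hlam : ∀ j, 0 ≤ lam j) :
    ∏ j ∈ s, lam j ≤ ∏ i, ∑ j ∈ s, g i j * lam j := calc
  ∏ j ∈ s, lam j = ∏ i, ∏ j ∈ s, lam j ^ g i j := by
    rw [prod_comm]
    refine prod_congr rfl fun j hj => ?_
    rw [← Real.rpow_sum_of_nonneg (hlam j) fun i _ => hg0 i j hj, hcol j hj, Real.rpow_one]
  _ ≤ ∏ i, ∑ j ∈ s, g i j * lam j :=
    prod_le_prod (fun i _ => prod_nonneg fun j _ => Real.rpow_nonneg (hlam j) _)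
      fun i _ => Real.geom_mean_le_arith_mean_weighted _ _ _ (hg0 i) (hrow i) fun j _ => hlam j

theorem one_sub_pow_mul_prod_range_le_of_antitone {β : ℝ} (hβ0 : 0 ≤ β) (hβ1 : β < 1)
    {a : ι → ℕ → ℝ} (ha : ∀ i j, 0 ≤ a i j)
    (hrow : ∀ i, ∑ j ∈ range (Fintype.card ι), a i j = 1)
    (hpre : ∀ k ≤ Fintype.card ι, (k : ℝ) - β ≤ ∑ i, ∑ j ∈ range k, a i j)
    {lam : ℕ → ℝ} (hlam : Antitone lam) (hlam0 : ∀ j, 0 ≤ lam j) :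
    (1 - β) ^ Fintype.card ι * ∏ j ∈ range (Fintype.card ι), lam j ≤
      ∏ i, ∑ j ∈ range (Fintype.card ι), a i j * lam j := by
  set N := Fintype.card ι
  have h1β : 0 < 1 - β := by linarith
  have hpre_le_one : ∀ i, ∀ k ≤ N, ∑ j ∈ range k, a i j ≤ 1 := fun i k hk =>
    hrow i ▸ sum_le_sum_of_subset_of_nonneg (range_subset_range.2 hk) fun j _ _ => ha i j
  obtain ⟨g, hg0, hgrow, hgcol, hgpre⟩ := exists_doublyStochastic_forall_sum_range_le
    (F := fun i k => min 1 ((∑ j ∈ range k, a i j) / (1 - β)))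
    (fun i => monotone_nat_of_le_succ fun k => min_le_min le_rfl <|
      div_le_div_of_nonneg_right (by rw [sum_range_succ]; linarith [ha i k]) h1β.le)
    (fun i => by simp) (fun i k => min_le_left _ _)
    (fun k hk => natCast_le_sum_min_one_div hβ0 hβ1 (fun i => sum_nonneg fun j _ => ha i j)
      (fun i => hpre_le_one i k hk) (hpre k hk))
  have hrow_le : ∀ i, (1 - β) * ∑ j ∈ range N, g i j * lam j ≤ ∑ j ∈ range N, a i j * lam j := by
    intro i
    rw [mul_sum]
    simp only [← mul_assoc]
    refine sum_range_mul_le_of_forall_sum_range_le (fun k hk => ?_) hlam hlam0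
    rw [← mul_sum]
    calc (1 - β) * ∑ j ∈ range k, g i j
        ≤ (1 - β) * ((∑ j ∈ range k, a i j) / (1 - β)) :=
          mul_le_mul_of_nonneg_left ((hgpre i k hk).trans (min_le_right _ _)) h1β.le
      _ = ∑ j ∈ range k, a i j := mul_div_cancel₀ _ h1β.ne'
  calc (1 - β) ^ N * ∏ j ∈ range N, lam j
      ≤ (1 - β) ^ N * ∏ i, ∑ j ∈ range N, g i j * lam j :=
        mul_le_mul_of_nonneg_left (prod_le_prod_sum_mul_of_doublyStochastic
          (fun i j hj => hg0 i j (mem_range.1 hj)) hgrow (fun j hj => hgcol j (mem_range.1 hj))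
          hlam0) (pow_nonneg h1β.le N)
    _ = ∏ i, (1 - β) * ∑ j ∈ range N, g i j * lam j := by
        rw [prod_mul_distrib, prod_const, card_univ]
    _ ≤ ∏ i, ∑ j ∈ range N, a i j * lam j :=
        prod_le_prod (fun i _ => mul_nonneg h1β.le (sum_nonneg fun j hj =>
          mul_nonneg (hg0 i j (mem_range.1 hj)) (hlam0 j))) fun i _ => hrow_le i

theorem exists_equiv_fin_antitone {α : Type*} [LinearOrder α] (f : ι → α) :
    ∃ e : Fin (Fintype.card ι) ≃ ι, Antitone (f ∘ e) := by
  set g := OrderDual.toDual ∘ f ∘ (Fintype.equivFin ι).symm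
  exact ⟨(Tuple.sort g).trans (Fintype.equivFin ι).symm,
    monotone_toDual_comp_iff.1 (Tuple.monotone_sort g)⟩

theorem sum_range_dite_eq_sum_fin {M : Type*} [AddCommMonoid M] {N k : ℕ} (hk : k ≤ N)
    (h : Fin N → M) :
    ∑ j ∈ range k, (if hj : j < N then h ⟨j, hj⟩ else 0) = ∑ j : Fin k, h (Fin.castLE hk j) := by
  rw [← Fin.sum_univ_eq_sum_range]
  exact sum_congr rfl fun j _ => dif_pos (j.2.trans_le hk)

theorem one_sub_pow_mul_prod_le_prod_sum_mul {β : ℝ} (hβ0 : 0 ≤ β) (hβ1 : β < 1)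
    {a : ι → ι → ℝ} (ha : ∀ i j, 0 ≤ a i j) (hrow : ∀ i, ∑ j, a i j = 1)
    (hcol : ∀ S : Finset ι, (#S : ℝ) - β ≤ ∑ j ∈ S, ∑ i, a i j)
    {lam : ι → ℝ} (hlam0 : ∀ j, 0 ≤ lam j) :
    (1 - β) ^ Fintype.card ι * ∏ j, lam j ≤ ∏ i, ∑ j, a i j * lam j := by
  obtain ⟨e, he⟩ := exists_equiv_fin_antitone lam
  -- the columns, listed by decreasing `lam`, extended by zero to all of `ℕ`
  set a' : ι → ℕ → ℝ := fun i k => if hk : k < Fintype.card ι then a i (e ⟨k, hk⟩) else 0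
  set lam' : ℕ → ℝ := fun k => if hk : k < Fintype.card ι then lam (e ⟨k, hk⟩) else 0
  have hsum_fin : ∀ i (f : ℝ → ℝ → ℝ),
      ∑ j ∈ range (Fintype.card ι), f (a' i j) (lam' j) = ∑ j, f (a i j) (lam j) := by
    intro i f
    rw [← e.sum_comp, ← Fin.sum_univ_eq_sum_range]
    exact sum_congr rfl fun j _ => by simp [a', lam', j.2]
  have key := one_sub_pow_mul_prod_range_le_of_antitone hβ0 hβ1 (a := a') (lam := lam')
    (fun i k => by unfold a'; split <;> simp [ha])
    (fun i => by simpa [hrow] using hsum_fin i fun x _ => x)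
    (fun k hk => by
      have hcolsum : ∀ j, ∑ i, a' i j =
          if hj : j < Fintype.card ι then ∑ i, a i (e ⟨j, hj⟩) else 0 := fun j => by
        unfold a'; split <;> simp
      rw [sum_comm, sum_congr rfl fun j _ => hcolsum j,
        sum_range_dite_eq_sum_fin hk fun j => ∑ i, a i (e j)]
      simpa using hcol (univ.map ((Fin.castLEEmb hk).trans e.toEmbedding)))
    (fun j k hjk => by
      unfold lam'
      split_ifs with hk hj hj
      · exact he hjk
      · omega
      · exact hlam0 _
      · exact le_rfl)
    (fun j => by unfold lam'; split <;> simp [hlam0])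
  have hprod : ∏ j ∈ range (Fintype.card ι), lam' j = ∏ j, lam j := by
    rw [← e.prod_comp, ← Fin.prod_univ_eq_prod_range]
    exact prod_congr rfl fun j _ => by simp [lam', j.2]
  rwa [hprod, prod_congr rfl fun i _ => hsum_fin i (· * ·)] at key

theorem card_sub_sqrt_le_sum {c : ι → ℝ} {ε : ℝ}
    (hc : ∑ j, (c j - 1) ^ 2 ≤ ε) (S : Finset ι) :
    (#S : ℝ) - √(Fintype.card ι * ε) ≤ ∑ j ∈ S, c j := by
  have hS : ∑ j ∈ S, c j = #S + ∑ j ∈ S, (c j - 1) := by simp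
  have hsq : (∑ j ∈ S, (c j - 1)) ^ 2 ≤ Fintype.card ι * ε := calc
    (∑ j ∈ S, (c j - 1)) ^ 2 ≤ #S * ∑ j ∈ S, (c j - 1) ^ 2 := sq_sum_le_card_mul_sum_sq
    _ ≤ Fintype.card ι * ε := mul_le_mul (by exact_mod_cast card_le_univ S)
        ((sum_le_sum_of_subset_of_nonneg (subset_univ S) fun j _ _ => sq_nonneg _).trans hc)
        (sum_nonneg fun j _ => sq_nonneg _) (Nat.cast_nonneg _)
  have := neg_le_of_abs_le (Real.abs_le_sqrt hsq)
  linarith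

end Transport

section Kraus

variable {n m κ : Type*}

theorem re_mul_diagonal_mul_conjTranspose_apply_self [Fintype m] [DecidableEq m]
    (P : Matrix n m ℂ) (d : m → ℝ) (i : n) :
    ((P * diagonal (Complex.ofReal ∘ d) * Pᴴ) i i).re = ∑ j, Complex.normSq (P i j) * d j := by
  simp only [mul_apply, diagonal_apply, mul_ite, mul_zero, sum_ite_eq', mem_univ, if_true,
    conjTranspose_apply, Complex.re_sum, Function.comp_apply]
  refine sum_congr rfl fun j _ => ?_
  rw [mul_right_comm, Complex.star_def, Complex.mul_conj, ← Complex.ofReal_mul,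
    Complex.ofReal_re]

theorem re_trace_sq_eq_sum_normSq [Fintype n] [DecidableEq n] {K : Matrix n n ℂ}
    (hK : K.IsHermitian) : (trace (K ^ 2)).re = ∑ i, ∑ j, Complex.normSq (K i j) := by
  have h := fun i => re_mul_diagonal_mul_conjTranspose_apply_self K (fun _ => 1) i
  simp only [Function.comp_def, Complex.ofReal_one, diagonal_one, mul_one, hK.eq] at h
  simp [sq, trace, Complex.re_sum, h]

theorem sum_sq_re_diag_le_re_trace_sq [Fintype n] [DecidableEq n] {K : Matrix n n ℂ}
    (hK : K.IsHermitian) : ∑ j, (K j j).re ^ 2 ≤ (trace (K ^ 2)).re := by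
  rw [re_trace_sq_eq_sum_normSq hK]
  refine sum_le_sum fun j _ => ?_
  calc (K j j).re ^ 2 ≤ Complex.normSq (K j j) := by
        rw [Complex.normSq_apply]; nlinarith [sq_nonneg (K j j).im]
    _ ≤ ∑ k, Complex.normSq (K j k) :=
        single_le_sum (fun k _ => Complex.normSq_nonneg _) (mem_univ j)

def krausWeight [Fintype κ] (P : κ → Matrix n m ℂ) (i : n) (j : m) : ℝ :=
  ∑ l, Complex.normSq (P l i j)

theorem re_sum_mul_diagonal_mul_conjTranspose_apply_self [Fintype m] [DecidableEq m] [Fintype κ]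
    (P : κ → Matrix n m ℂ) (d : m → ℝ) (i : n) :
    ((∑ l, P l * diagonal (Complex.ofReal ∘ d) * (P l)ᴴ) i i).re =
      ∑ j, krausWeight P i j * d j := by
  simp only [Matrix.sum_apply, Complex.re_sum, re_mul_diagonal_mul_conjTranspose_apply_self,
    krausWeight, sum_mul]
  exact sum_comm

theorem sum_krausWeight_right [Fintype m] [DecidableEq m] [Fintype κ] (P : κ → Matrix n m ℂ)
    (i : n) : ∑ j, krausWeight P i j = ((∑ l, P l * (P l)ᴴ) i i).re := by
  simpa [Function.comp_def] using
    (re_sum_mul_diagonal_mul_conjTranspose_apply_self P (fun _ => 1) i).symm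

theorem sum_krausWeight_left [Fintype n] [DecidableEq n] [Fintype κ] (P : κ → Matrix n m ℂ)
    (j : m) : ∑ i, krausWeight P i j = ((∑ l, (P l)ᴴ * P l) j j).re := by
  simpa [krausWeight] using sum_krausWeight_right (fun l => (P l)ᴴ) j

end Kraus

theorem trace_mul_sub_one_sq_comm {n R : Type*} [Fintype n] [DecidableEq n] [CommRing R]
    (X Y : Matrix n n R) : trace ((X * Y - 1) ^ 2) = trace ((Y * X - 1) ^ 2) := by
  have h : ∀ Z : Matrix n n R,
      trace ((Z - 1) ^ 2) = trace (Z * Z) - 2 * trace Z + trace (1 : Matrix n n R) := by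
    intro Z
    rw [show (Z - 1) ^ 2 = Z * Z - Z - Z + 1 by noncomm_ring]
    simp only [trace_add, trace_sub]; ring
  rw [h, h, trace_mul_comm X Y, show X * Y * (X * Y) = X * (Y * X * Y) by noncomm_ring,
    trace_mul_comm X, show Y * X * Y * X = Y * X * (Y * X) by noncomm_ring]

section Operator

variable {n κ : Type*} [Fintype n] [Fintype κ]

theorem posSemidef_sum_mul_mul_conjTranspose (B : κ → Matrix n n ℂ) {X : Matrix n n ℂ}
    (hX : X.PosSemidef) : (∑ l, B l * X * (B l)ᴴ).PosSemidef :=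
  posSemidef_sum _ fun l _ => hX.mul_mul_conjTranspose_same (B l)

theorem sum_scaled_mul_mul_conjTranspose (A : κ → Matrix n n ℂ) (L R Z : Matrix n n ℂ) :
    ∑ l, L * A l * R * Z * (L * A l * R)ᴴ = L * (∑ l, A l * (R * Z * Rᴴ) * (A l)ᴴ) * Lᴴ := by
  simp only [Finset.mul_sum, Finset.sum_mul, conjTranspose_mul]
  exact sum_congr rfl fun l _ => by noncomm_ring

variable [DecidableEq n]

theorem one_sub_sqrt_pow_mul_prod_le_prod_of_diagonal {P : κ → Matrix n n ℂ} {ε : ℝ}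
    (hP : ∑ l, P l * (P l)ᴴ = 1) (hε : (trace ((∑ l, (P l)ᴴ * P l - 1) ^ 2)).re ≤ ε)
    (hβ : √(Fintype.card n * ε) < 1) {lam mu : n → ℝ} (hlam : ∀ j, 0 ≤ lam j)
    (hmu : ∑ l, P l * diagonal (Complex.ofReal ∘ lam) * (P l)ᴴ = diagonal (Complex.ofReal ∘ mu)) :
    (1 - √(Fintype.card n * ε)) ^ Fintype.card n * ∏ j, lam j ≤ ∏ i, mu i := by
  have hK : (∑ l, (P l)ᴴ * P l - 1).IsHermitian :=
    (isSelfAdjoint_sum _ fun l _ => isHermitian_conjTranspose_mul_self (P l)).sub isHermitian_one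
  have hcol : ∑ j, ((∑ i, krausWeight P i j) - 1) ^ 2 ≤ ε := by
    refine le_trans (le_of_eq (sum_congr rfl fun j _ => ?_))
      ((sum_sq_re_diag_le_re_trace_sq hK).trans hε)
    simp [sum_krausWeight_left]
  have hmu' : ∀ i, mu i = ∑ j, krausWeight P i j * lam j := fun i => by
    simpa [hmu] using re_sum_mul_diagonal_mul_conjTranspose_apply_self P lam i
  simp only [hmu']
  exact one_sub_pow_mul_prod_le_prod_sum_mul (a := krausWeight P) (Real.sqrt_nonneg _) hβ
    (fun i j => sum_nonneg fun l _ => Complex.normSq_nonneg _)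
    (fun i => by rw [sum_krausWeight_right, hP, one_apply_eq, Complex.one_re])
    (card_sub_sqrt_le_sum hcol) hlam

theorem one_sub_sqrt_pow_mul_det_le_det_sum_mul_mul_conjTranspose {B : κ → Matrix n n ℂ}
    {ε : ℝ} (hB : ∑ l, B l * (B l)ᴴ = 1) (hε : (trace ((∑ l, (B l)ᴴ * B l - 1) ^ 2)).re ≤ ε)
    (hβ : √(Fintype.card n * ε) < 1) {Z : Matrix n n ℂ} (hZ : Z.PosSemidef) :
    (1 - √(Fintype.card n * ε)) ^ Fintype.card n * Z.det.re ≤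
      (∑ l, B l * Z * (B l)ᴴ).det.re := by
  set M := ∑ l, B l * Z * (B l)ᴴ
  have hM : M.PosSemidef := posSemidef_sum_mul_mul_conjTranspose B hZ
  set V : Matrix n n ℂ := (hZ.1.eigenvectorUnitary : Matrix n n ℂ)
  set W : Matrix n n ℂ := (hM.1.eigenvectorUnitary : Matrix n n ℂ)
  have hV : V * Vᴴ = 1 := mem_unitaryGroup_iff.1 hZ.1.eigenvectorUnitary.2
  have hW : W * Wᴴ = 1 := mem_unitaryGroup_iff.1 hM.1.eigenvectorUnitary.2
  have hW' : Wᴴ * W = 1 := mem_unitaryGroup_iff'.1 hM.1.eigenvectorUnitary.2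
  have hZV : Z = V * diagonal (Complex.ofReal ∘ hZ.1.eigenvalues) * Vᴴ := by
    have h := hZ.1.spectral_theorem
    rwa [Unitary.conjStarAlgAut_apply, star_eq_conjTranspose] at h
  have hMW : Wᴴ * M * W = diagonal (Complex.ofReal ∘ hM.1.eigenvalues) := by
    have h := hM.1.conjStarAlgAut_star_eigenvectorUnitary
    rwa [Unitary.conjStarAlgAut_star_apply, star_eq_conjTranspose] at h
  -- the Kraus operators in the eigenbases of `Z` and of its image `M`
  set P := fun l => Wᴴ * B l * V
  have hconj := sum_scaled_mul_mul_conjTranspose B Wᴴ V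
  have hP : ∑ l, P l * (P l)ᴴ = 1 := by
    have h := hconj 1
    simp only [Matrix.mul_one, hV, hB, conjTranspose_conjTranspose, hW'] at h
    exact h
  have hPε : (trace ((∑ l, (P l)ᴴ * P l - 1) ^ 2)).re ≤ ε := by
    have h : ∑ l, (P l)ᴴ * P l = Vᴴ * ((∑ l, (B l)ᴴ * B l) * V) := by
      simp only [P, Finset.mul_sum, Finset.sum_mul, conjTranspose_mul, conjTranspose_conjTranspose]
      refine sum_congr rfl fun l _ => ?_
      calc _ = Vᴴ * (B l)ᴴ * (W * Wᴴ) * B l * V := by noncomm_ring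
        _ = Vᴴ * ((B l)ᴴ * B l * V) := by rw [hW]; noncomm_ring
    rwa [h, trace_mul_sub_one_sq_comm, Matrix.mul_assoc, hV, Matrix.mul_one]
  have key := one_sub_sqrt_pow_mul_prod_le_prod_of_diagonal hP hPε hβ hZ.eigenvalues_nonneg
    (by rw [hconj, ← hZV, conjTranspose_conjTranspose, hMW])
  rw [hZ.1.det_eq_prod_eigenvalues, hM.1.det_eq_prod_eigenvalues]
  exact_mod_cast key

open scoped MatrixOrder in
theorem Matrix.PosDef.exists_isUnit_det_eq_mul_conjTranspose {C : Matrix n n ℂ}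
    (hC : C.PosDef) : ∃ R : Matrix n n ℂ, IsUnit R.det ∧ C = R * Rᴴ := by
  obtain ⟨y, hy, hCy⟩ :=
    CStarAlgebra.isStrictlyPositive_iff_eq_star_mul_self.1 hC.isStrictlyPositive
  refine ⟨yᴴ, (isUnit_iff_isUnit_det _).1 ?_, ?_⟩
  · rw [← star_eq_conjTranspose]; exact hy.star
  · rw [hCy, conjTranspose_conjTranspose, star_eq_conjTranspose]

theorem re_det_mul_mul_conjTranspose (S M : Matrix n n ℂ) :
    (S * M * Sᴴ).det.re = Complex.normSq S.det * M.det.re := by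
  rw [det_mul, det_mul, det_conjTranspose, mul_right_comm, Complex.star_def, Complex.mul_conj,
    Complex.re_ofReal_mul]

theorem re_det_mul_conjTranspose (S : Matrix n n ℂ) :
    (S * Sᴴ).det.re = Complex.normSq S.det := by
  rw [det_mul, det_conjTranspose, Complex.star_def, Complex.mul_conj, Complex.ofReal_re]

theorem one_sub_sqrt_pow_mul_det_div_le_det_sum_mul_mul_conjTranspose {A : κ → Matrix n n ℂ}
    {C : Matrix n n ℂ} (hC : C.PosDef) (hD : (∑ l, A l * C * (A l)ᴴ).PosDef) {ε : ℝ}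
    (hfix : (trace ((C * (∑ l, (A l)ᴴ * (∑ j, A j * C * (A j)ᴴ)⁻¹ * A l) - 1) ^ 2)).re ≤ ε)
    (hβ : √(Fintype.card n * ε) < 1) {X : Matrix n n ℂ} (hX : X.PosSemidef) :
    (1 - √(Fintype.card n * ε)) ^ Fintype.card n * (∑ l, A l * C * (A l)ᴴ).det.re * X.det.re /
      C.det.re ≤ (∑ l, A l * X * (A l)ᴴ).det.re := by
  set D := ∑ l, A l * C * (A l)ᴴ
  obtain ⟨R, hR, hCR⟩ := hC.exists_isUnit_det_eq_mul_conjTranspose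
  obtain ⟨S, hS, hDS⟩ := hD.exists_isUnit_det_eq_mul_conjTranspose
  have hRR : R * R⁻¹ = 1 := mul_nonsing_inv R hR
  have hSS : S * S⁻¹ = 1 := mul_nonsing_inv S hS
  -- operator scaling: `B l` is `T(C)^(-1/2) * A l * C^(1/2)` up to unitary factors
  set B := fun l => S⁻¹ * A l * R
  have hscale := sum_scaled_mul_mul_conjTranspose A S⁻¹ R
  have hB : ∑ l, B l * (B l)ᴴ = 1 := calc
    ∑ l, B l * (B l)ᴴ = ∑ l, B l * 1 * (B l)ᴴ := by simp only [Matrix.mul_one]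
    _ = S⁻¹ * D * S⁻¹ᴴ := by rw [hscale, Matrix.mul_one, ← hCR]
    _ = (S⁻¹ * S) * (S⁻¹ * S)ᴴ := by rw [hDS, conjTranspose_mul]; noncomm_ring
    _ = 1 := by rw [nonsing_inv_mul S hS, conjTranspose_one, Matrix.one_mul]
  have hBε : (trace ((∑ l, (B l)ᴴ * B l - 1) ^ 2)).re ≤ ε := by
    have hDinv : S⁻¹ᴴ * S⁻¹ = D⁻¹ := by
      rw [hDS, Matrix.mul_inv_rev, conjTranspose_nonsing_inv]
    have h : ∑ l, (B l)ᴴ * B l = Rᴴ * ((∑ l, (A l)ᴴ * D⁻¹ * A l) * R) := by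
      simp only [B, ← hDinv, Finset.mul_sum, Finset.sum_mul, conjTranspose_mul]
      exact sum_congr rfl fun l _ => by noncomm_ring
    rwa [h, trace_mul_sub_one_sq_comm, Matrix.mul_assoc, ← hCR, trace_mul_sub_one_sq_comm]
  set Z := R⁻¹ * X * R⁻¹ᴴ
  have hXZ : X = R * Z * Rᴴ := by
    simp only [Z, ← Matrix.mul_assoc, hRR, Matrix.one_mul]
    rw [Matrix.mul_assoc, ← conjTranspose_mul, hRR, conjTranspose_one, Matrix.mul_one]
  have hTX : ∑ l, A l * X * (A l)ᴴ = S * (∑ l, B l * Z * (B l)ᴴ) * Sᴴ := by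
    rw [hscale, ← hXZ, ← Matrix.mul_assoc, ← Matrix.mul_assoc, hSS, Matrix.one_mul,
      Matrix.mul_assoc, ← conjTranspose_mul, hSS, conjTranspose_one, Matrix.mul_one]
  have hRpos : 0 < Complex.normSq R.det := Complex.normSq_pos.2 hR.ne_zero
  have key := one_sub_sqrt_pow_mul_det_le_det_sum_mul_mul_conjTranspose hB hBε hβ
    (hX.mul_mul_conjTranspose_same R⁻¹)
  rw [hTX, re_det_mul_mul_conjTranspose, hXZ, re_det_mul_mul_conjTranspose, hDS, hCR,
    re_det_mul_conjTranspose, re_det_mul_conjTranspose, mul_div_assoc,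
    mul_div_cancel_left₀ _ hRpos.ne', mul_right_comm, mul_comm _ (Complex.normSq _)]
  exact mul_le_mul_of_nonneg_left key (Complex.normSq_nonneg _)

end Operator

theorem le_cap {ι N : Type*} [Fintype ι] [Fintype N] [DecidableEq N] {A : ι → Matrix N N ℂ}
    {r : ℝ} (h : ∀ X : Matrix N N ℂ, X.PosDef → X.det = 1 → r ≤ (∑ i, A i * X * (A i)ᴴ).det.re) :
    r ≤ cap A :=
  le_csInf ⟨_, 1, PosDef.one, det_one, rfl⟩ fun _ ⟨X, hX, hX1, hr⟩ => hr ▸ h X hX hX1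

theorem cap_le_div_det {ι N : Type*} [Fintype ι] [Fintype N] [DecidableEq N]
    (A : ι → Matrix N N ℂ) {X : Matrix N N ℂ} (hX : X.PosDef) :
    cap A ≤ (∑ i, A i * X * (A i)ᴴ).det.re / X.det.re := by
  set d := X.det.re
  have hXd : X.det = d := Complex.eq_re_of_ofReal_le hX.det_pos.le
  have hd : 0 < d := (Complex.pos_iff.1 hX.det_pos).1
  set t := d ^ (-1 / Fintype.card N : ℝ)
  have ht : t ^ Fintype.card N * d = 1 := by
    rcases (Fintype.card N).eq_zero_or_pos with h0 | hpos
    · have := Fintype.card_eq_zero_iff.1 h0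
      simp [d]
    · rw [← Real.rpow_natCast, ← Real.rpow_mul hd.le, div_mul_cancel₀ _ (Nat.cast_pos.2 hpos).ne',
        Real.rpow_neg_one, inv_mul_cancel₀ hd.ne']
  have hbdd : BddBelow {r : ℝ | ∃ Y : Matrix N N ℂ,
      Y.PosDef ∧ Y.det = 1 ∧ (∑ i, A i * Y * (A i)ᴴ).det.re = r} :=
    ⟨0, fun _ ⟨Y, hY, _, hr⟩ => hr ▸
      (Complex.nonneg_iff.1 (posSemidef_sum_mul_mul_conjTranspose A hY.posSemidef).det_nonneg).1⟩
  refine csInf_le hbdd ⟨(t : ℂ) • X, hX.smul (by positivity), ?_, ?_⟩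
  · rw [det_smul, hXd, ← Complex.ofReal_pow, ← Complex.ofReal_mul, ht, Complex.ofReal_one]
  · simp only [Matrix.mul_smul, Matrix.smul_mul, ← Finset.smul_sum, det_smul,
      ← Complex.ofReal_pow, Complex.re_ofReal_mul]
    rw [eq_div_iff hd.ne', mul_right_comm, ht, one_mul]

theorem sqrt_mul_lt_one_of_le_one_div_add_one {n : ℕ} {ε : ℝ} (hε : ε ≤ 1 / (n + 1)) :
    √(n * ε) < 1 := by
  rw [Real.sqrt_lt' one_pos, one_pow]
  calc (n : ℝ) * ε ≤ n * (1 / (n + 1)) := mul_le_mul_of_nonneg_left hε n.cast_nonneg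
    _ < 1 := by rw [mul_one_div, div_lt_one (by positivity)]; linarith

theorem cap_bounds_of_approximate_fixed_point (n m : ℕ) (ε : ℝ)
    (A : Fin m → Matrix (Fin n) (Fin n) ℂ)
    (C : Matrix (Fin n) (Fin n) ℂ) (hC : C.PosDef)
    (hTC : IsUnit (∑ i, A i * C * (A i)ᴴ).det)
    (hfix : (Matrix.trace
        ((C * (∑ i, (A i)ᴴ * (∑ j, A j * C * (A j)ᴴ)⁻¹ * A i) - 1) ^ 2)).re ≤ ε)
    (hε : ε ≤ 1 / ((n : ℝ) + 1)) :
    (1 - Real.sqrt (n * ε)) ^ n * ((∑ i, A i * C * (A i)ᴴ).det).re / (C.det).re ≤ cap A ∧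
      cap A ≤ ((∑ i, A i * C * (A i)ᴴ).det).re / (C.det).re := by
  have hD : (∑ i, A i * C * (A i)ᴴ).PosDef :=
    (posSemidef_sum_mul_mul_conjTranspose A hC.posSemidef).posDef_iff_det_ne_zero.2 hTC.ne_zero
  have hβ : √(Fintype.card (Fin n) * ε) < 1 := by
    simpa only [Fintype.card_fin] using sqrt_mul_lt_one_of_le_one_div_add_one hε
  refine ⟨le_cap fun X hX hX1 => ?_, cap_le_div_det A hC⟩
  simpa only [Fintype.card_fin, hX1, Complex.one_re, mul_one] using
    one_sub_sqrt_pow_mul_det_div_le_det_sum_mul_mul_conjTranspose hC hD hfix hβ hX.posSemidef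
end
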